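/- Let the four 'inverted' coin states be |s_d^a⟩ = a(Σ_{c∈{↑,↓,←,→}} |c⟩ + √l|↺⟩ − (4+l)|d⟩) for d ∈ {↑,↓,←,→} and a ≠ 0. These four vectors together with |s_c⟩ span ℂ⁵, and each |s_d^a⟩ is a (−1)-eigenvector of the Grover coin C = 2|s_c⟩⟨s_c| − I₅. -/

import Mathlib

/-!
Put `w = (1, 1, 1, 1, √l) = √(4+l) |s_c⟩`, so that `‖w‖² = 4 + l` and `|s_d^a⟩ = a (w − ‖w‖² e_d)`.
For a direction `d` we have `⟨w, e_d⟩ = 1`, hence `⟨w, s_d^a⟩ = a (‖w‖² − ‖w‖²) = 0`; since the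
coin `2|s_c⟩⟨s_c| − I` is the reflection fixing `|s_c⟩` and negating its orthogonal complement,
`|s_d^a⟩` is a `(−1)`-eigenvector. For the span: `w` and the `|s_d^a⟩` give the four direction basis
vectors `e_d`, and then `e_↺ = (w − Σ_d e_d) / √l`.
-/

open Matrix

/-- The Grover self-loop coin state `|s_c⟩`, basis `0=↑, 1=↓, 2=←, 3=→, 4=↺`. -/
noncomputable def scState (l : ℝ) : Fin 5 → ℂ :=
  fun c => if c = 4 then (Real.sqrt l : ℂ) / (Real.sqrt (4 + l) : ℂ)
           else 1 / (Real.sqrt (4 + l) : ℂ)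

/-- The 5-dimensional Grover coin `C = 2|s_c⟩⟨s_c| − I₅`. -/
noncomputable def groverCoin (l : ℝ) : Matrix (Fin 5) (Fin 5) ℂ :=
  (2 : ℂ) • Matrix.vecMulVec (scState l) (star (scState l)) - 1

/-- The `inverted` coin state
`|s_d^a⟩ = a(Σ_{c∈{↑,↓,←,→}}|c⟩ + √l|↺⟩ − (4+l)|d⟩)`: entry `−(3+l)` at the
direction `d`, `1` at the other three directions, and `√l` at the loop. -/
noncomputable def sDState (l a : ℝ) (d : Fin 5) : Fin 5 → ℂ :=
  fun c => (a : ℂ) * ((if c = 4 then (Real.sqrt l : ℂ) else 1) -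
    if c = d then ((4 + l : ℝ) : ℂ) else 0)

section Reflection

variable {R n : Type*} [CommRing R] [StarRing R] [Fintype n] [DecidableEq n]

theorem two_smul_vecMulVec_star_sub_one_mulVec (u v : n → R) :
    ((2 : R) • vecMulVec u (star u) - 1) *ᵥ v = (2 * (star u ⬝ᵥ v)) • u - v := by
  rw [sub_mulVec, smul_mulVec, vecMulVec_mulVec, one_mulVec, op_smul_eq_smul, smul_smul]

theorem two_smul_vecMulVec_star_sub_one_mulVec_of_star_dotProduct_eq_zero {u v : n → R}
    (h : star u ⬝ᵥ v = 0) : ((2 : R) • vecMulVec u (star u) - 1) *ᵥ v = -v := by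
  rw [two_smul_vecMulVec_star_sub_one_mulVec, h, mul_zero, zero_smul, zero_sub]

end Reflection

theorem Submodule.eq_top_of_forall_single_mem {R η : Type*} [Semiring R] [Finite η]
    [DecidableEq η] {S : Submodule R (η → R)} (h : ∀ i, Pi.single i 1 ∈ S) : S = ⊤ := by
  rw [eq_top_iff, ← (Pi.basisFun R η).span_eq, Submodule.span_le]
  rintro _ ⟨i, rfl⟩
  simpa using h i

/-- The unnormalised state `√(4+l) |s_c⟩`. -/
noncomputable def scVec (l : ℝ) : Fin 5 → ℂ :=
  fun c => if c = 4 then (Real.sqrt l : ℂ) else 1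

namespace scVec

theorem apply_of_ne (l : ℝ) {d : Fin 5} (hd : d ≠ 4) : scVec l d = 1 := if_neg hd

theorem star_eq (l : ℝ) : star (scVec l) = scVec l := by
  funext c
  by_cases hc : c = 4 <;> simp [scVec, hc]

theorem dotProduct_self {l : ℝ} (hl : 0 ≤ l) : scVec l ⬝ᵥ scVec l = ((4 + l : ℝ) : ℂ) := by
  have hsq : (Real.sqrt l : ℂ) * Real.sqrt l = l := by
    rw [← Complex.ofReal_mul, Real.mul_self_sqrt hl]
  simp [dotProduct, Fin.sum_univ_five, scVec, hsq]
  ring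

theorem eq_sum_single (l : ℝ) : scVec l = Pi.single 0 1 + Pi.single 1 1 + Pi.single 2 1 +
    Pi.single 3 1 + (Real.sqrt l : ℂ) • Pi.single 4 1 := by
  funext c
  fin_cases c <;> simp [scVec]

end scVec

theorem scState_eq_smul_scVec (l : ℝ) :
    scState l = ((Real.sqrt (4 + l) : ℂ))⁻¹ • scVec l := by
  funext c
  by_cases hc : c = 4 <;> simp [scState, scVec, hc, div_eq_inv_mul]

theorem sDState_eq (l a : ℝ) (d : Fin 5) :
    sDState l a d = (a : ℂ) • (scVec l - ((4 + l : ℝ) : ℂ) • Pi.single d 1) := by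
  funext c
  by_cases hc : c = d <;> simp [sDState, scVec, hc]

theorem scVec_dotProduct_sDState {l : ℝ} (hl : 0 ≤ l) (a : ℝ) {d : Fin 5} (hd : d ≠ 4) :
    scVec l ⬝ᵥ sDState l a d = 0 := by
  rw [sDState_eq, dotProduct_smul, dotProduct_sub, dotProduct_smul, dotProduct_single,
    scVec.dotProduct_self hl, scVec.apply_of_ne l hd, mul_one, smul_eq_mul, smul_eq_mul, mul_one,
    sub_self, mul_zero]

theorem groverCoin_mulVec_sDState {l : ℝ} (hl : 0 ≤ l) (a : ℝ) {d : Fin 5} (hd : d ≠ 4) :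
    groverCoin l *ᵥ sDState l a d = -sDState l a d := by
  refine two_smul_vecMulVec_star_sub_one_mulVec_of_star_dotProduct_eq_zero ?_
  rw [scState_eq_smul_scVec, star_smul, scVec.star_eq, smul_dotProduct,
    scVec_dotProduct_sDState hl a hd, smul_zero]

theorem span_scState_sDState_eq_top {l a : ℝ} (hl : 0 < l) (ha : a ≠ 0) :
    Submodule.span ℂ
      ({scState l, sDState l a 0, sDState l a 1, sDState l a 2, sDState l a 3} :
        Set (Fin 5 → ℂ)) = ⊤ := by
  set S := Submodule.span ℂ
    ({scState l, sDState l a 0, sDState l a 1, sDState l a 2, sDState l a 3} :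
      Set (Fin 5 → ℂ))
  have hsqrt_ne : ∀ {x : ℝ}, 0 < x → (Real.sqrt x : ℂ) ≠ 0 := fun hx =>
    Complex.ofReal_ne_zero.2 (Real.sqrt_ne_zero'.2 hx)
  have h4l : (0 : ℝ) < 4 + l := by linarith
  have hscVec : scVec l ∈ S := by
    rw [← Submodule.smul_mem_iff S (inv_ne_zero (hsqrt_ne h4l)), ← scState_eq_smul_scVec]
    exact Submodule.subset_span (by simp)
  have hdir : ∀ d : Fin 5, d ≠ 4 → Pi.single d 1 ∈ S := by
    intro d hd
    have hsD : sDState l a d ∈ S := by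
      apply Submodule.subset_span
      fin_cases d <;> simp at hd ⊢
    rw [sDState_eq, Submodule.smul_mem_iff S (Complex.ofReal_ne_zero.2 ha)] at hsD
    rwa [← Submodule.smul_mem_iff S (Complex.ofReal_ne_zero.2 h4l.ne'),
      ← Submodule.sub_mem_iff_right S hscVec]
  have hloop : Pi.single 4 1 ∈ S := by
    have hdirs :
        (Pi.single 0 1 + Pi.single 1 1 + Pi.single 2 1 + Pi.single 3 1 : Fin 5 → ℂ) ∈ S :=
      S.add_mem (S.add_mem (S.add_mem (hdir 0 (by decide)) (hdir 1 (by decide)))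
        (hdir 2 (by decide))) (hdir 3 (by decide))
    rw [← Submodule.smul_mem_iff S (hsqrt_ne hl), ← Submodule.add_mem_iff_right S hdirs,
      ← scVec.eq_sum_single]
    exact hscVec
  refine Submodule.eq_top_of_forall_single_mem fun d => ?_
  by_cases hd : d = 4
  · exact hd ▸ hloop
  · exact hdir d hd

/-- The four inverted states together with `|s_c⟩` span `ℂ⁵`, and each
`|s_d^a⟩` (for `d ∈ {↑,↓,←,→}`, `a ≠ 0`) is a `(−1)`-eigenvector of the Grover
coin. -/
theorem sD_span_and_neg_eigenvectors (l a : ℝ) (hl : 0 < l) (ha : a ≠ 0) :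
    Submodule.span ℂ
        ({scState l, sDState l a 0, sDState l a 1, sDState l a 2, sDState l a 3} :
          Set (Fin 5 → ℂ)) = ⊤ ∧
    ∀ d : Fin 5, d ≠ 4 →
      (groverCoin l).mulVec (sDState l a d) = -(sDState l a d) :=
  ⟨span_scState_sDState_eq_top hl ha, fun _ hd => groverCoin_mulVec_sDState hl.le a hd⟩
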